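/- arXiv:1707.07801 — 3 statements merged into one kernel-verified Lean document; each statement's English description precedes it below -/
import Mathlib

section
/- Let F be a safe function and P a ground protocol that is F-increasing. Then P keeps its secret inputs: for every valid trace (N₁,s₁),…,(Nₙ,sₙ) of P from initial knowledge K₀ and every atom α such that F(α, K₀) ⊒ ⌜α⌝, ⌜α⌝ ≠ ⊥ and ¬(⌜K(I)⌝ ⊒ ⌜α⌝), the final intruder knowledge Kₙ = K₀ ∪ {s₁,…,sₙ} does not derive the secret, i.e. ¬(Kₙ ⊢ atom α). -/
/-- Messages: atoms, pairs, and encryptions (`enc m k` encrypts `m` with key `k`). -/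
inductive Msg (Atom : Type) : Type
  | atom : Atom → Msg Atom
  | pair : Msg Atom → Msg Atom → Msg Atom
  | enc  : Msg Atom → Atom → Msg Atom

namespace Msg

/-- The set `𝒜(m)` of atoms occurring in a message. -/
def atoms {Atom : Type} : Msg Atom → Set Atom
  | atom a => {a}
  | pair m₁ m₂ => m₁.atoms ∪ m₂.atoms
  | enc m k => m.atoms ∪ {k}

end Msg

/-- The set `𝒜(M)` of atoms occurring in a set of messages. -/
def atomsOf {Atom : Type} (M : Set (Msg Atom)) : Set Atom := ⋃ m ∈ M, m.atoms

/-- Dolev–Yao deduction `M ⊢ m`, relative to a set of keys and a key-inverse map. -/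
inductive Deduces {Atom : Type} (Key : Set Atom) (inv : Atom → Atom)
    (M : Set (Msg Atom)) : Msg Atom → Prop
  | ax {m} (h : m ∈ M) : Deduces Key inv M m
  | pair {m₁ m₂} (h₁ : Deduces Key inv M m₁) (h₂ : Deduces Key inv M m₂) :
      Deduces Key inv M (Msg.pair m₁ m₂)
  | fst {m₁ m₂} (h : Deduces Key inv M (Msg.pair m₁ m₂)) : Deduces Key inv M m₁
  | snd {m₁ m₂} (h : Deduces Key inv M (Msg.pair m₁ m₂)) : Deduces Key inv M m₂
  | enc {m k} (hk : k ∈ Key) (h : Deduces Key inv M m)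
      (hkey : Deduces Key inv M (Msg.atom k)) : Deduces Key inv M (Msg.enc m k)
  | dec {m k} (hk : k ∈ Key) (h : Deduces Key inv M (Msg.enc m k))
      (hkey : Deduces Key inv M (Msg.atom (inv k))) : Deduces Key inv M m

/-- A well-formed function on atoms and sets of messages. -/
def WellFormed {Atom L : Type} [CompleteLattice L]
    (F : Atom → Set (Msg Atom) → L) : Prop :=
  (∀ α : Atom, F α {Msg.atom α} = ⊥) ∧
  (∀ (α : Atom) (M : Set (Msg Atom)), α ∉ atomsOf M → F α M = ⊤) ∧
  (∀ (α : Atom) (M₁ M₂ : Set (Msg Atom)), F α (M₁ ∪ M₂) = F α M₁ ⊓ F α M₂)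

/-- A full-invariant-by-intruder function: deduction cannot lower the level of an
atom unless the intruder is authorized to know it (`⌜K(I)⌝ ⊒ ⌜α⌝`). -/
def FullInvariant {Atom L : Type} [CompleteLattice L] (Key : Set Atom) (inv : Atom → Atom)
    (lvl : Atom → L) (KI : L) (F : Atom → Set (Msg Atom) → L) : Prop :=
  ∀ (M : Set (Msg Atom)) (m : Msg Atom), Deduces Key inv M m →
    ∀ α ∈ m.atoms, F α M ≤ F α {m} ∨ lvl α ≤ KI

/-- A safe function: well-formed and full-invariant-by-intruder. -/
def Safe {Atom L : Type} [CompleteLattice L] (Key : Set Atom) (inv : Atom → Atom)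
    (lvl : Atom → L) (KI : L) (F : Atom → Set (Msg Atom) → L) : Prop :=
  WellFormed F ∧ FullInvariant Key inv lvl KI F

/-- A ground protocol `P` is `F`-increasing: for each step `(N, s)` and each atom `α` of `s`,
`F(α, s) ⊒ ⌜α⌝ ⊓ F(α, N)`. -/
def Increasing {Atom L : Type} [CompleteLattice L] (lvl : Atom → L)
    (F : Atom → Set (Msg Atom) → L) (P : Set (Set (Msg Atom) × Msg Atom)) : Prop :=
  ∀ st ∈ P, ∀ α ∈ (Prod.snd st).atoms, lvl α ⊓ F α st.1 ≤ F α {st.2}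

/-- The intruder knowledge `Kᵢ = K₀ ∪ {s₁, …, sᵢ}` after the first `i` steps of a trace. -/
def knowAfter {Atom : Type} (K₀ : Set (Msg Atom))
    (tr : List (Set (Msg Atom) × Msg Atom)) (i : ℕ) : Set (Msg Atom) :=
  K₀ ∪ { m | ∃ st ∈ tr.take i, st.2 = m }

/-- A valid trace of protocol `P` from initial knowledge `K₀`: every step belongs to `P`
and each received message of step `i+1` is deducible from `Kᵢ`. -/
def ValidTrace {Atom : Type} (Key : Set Atom) (inv : Atom → Atom)
    (P : Set (Set (Msg Atom) × Msg Atom)) (K₀ : Set (Msg Atom))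
    (tr : List (Set (Msg Atom) × Msg Atom)) : Prop :=
  ∀ (i : ℕ) (hi : i < tr.length), tr.get ⟨i, hi⟩ ∈ P ∧
    ∀ m ∈ (tr.get ⟨i, hi⟩).1, Deduces Key inv (knowAfter K₀ tr i) m

/-
The secrecy level `F(α, ·)` of an atom bounds `⌜α⌝` from below on the intruder knowledge at
every stage of a trace. Initially this is the hypothesis on `K₀`. In a step `(N, s)` every
received message is deduced from the current knowledge, so by full invariance (the intruder is
not cleared for `α`) each of them keeps level `⊒ ⌜α⌝`; as `N` is finite and `F` turns unions
into meets, so does `N`, and the protocol being increasing passes this on to the sent message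
`s`. Finally, deducing `atom α` would give `⌜α⌝ ⊑ F(α, {atom α}) = ⊥`.
-/

variable {Atom L : Type} [CompleteLattice L] {F : Atom → Set (Msg Atom) → L}

namespace WellFormed

theorem apply_union (hF : WellFormed F) (α : Atom) (M₁ M₂ : Set (Msg Atom)) :
    F α (M₁ ∪ M₂) = F α M₁ ⊓ F α M₂ :=
  hF.2.2 α M₁ M₂

theorem apply_empty (hF : WellFormed F) (α : Atom) : F α ∅ = ⊤ :=
  hF.2.1 α ∅ (by simp [atomsOf])

theorem apply_singleton_of_notMem (hF : WellFormed F) {α : Atom} {m : Msg Atom}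
    (h : α ∉ m.atoms) : F α {m} = ⊤ :=
  hF.2.1 α {m} (by simpa [atomsOf])

theorem le_apply_of_finite (hF : WellFormed F) {α : Atom} {c : L} {M : Set (Msg Atom)}
    (hM : M.Finite) (h : ∀ m ∈ M, c ≤ F α {m}) : c ≤ F α M := by
  induction M, hM using Set.Finite.induction_on with
  | empty => simp [hF.apply_empty]
  | @insert m S _ _ ih =>
    rw [Set.insert_eq, hF.apply_union]
    exact le_inf (h m (Set.mem_insert m S)) (ih fun x hx => h x (Set.mem_insert_of_mem m hx))

end WellFormed

theorem knowAfter_zero (K₀ : Set (Msg Atom)) (tr : List (Set (Msg Atom) × Msg Atom)) :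
    knowAfter K₀ tr 0 = K₀ := by
  simp [knowAfter]

theorem knowAfter_succ (K₀ : Set (Msg Atom)) (tr : List (Set (Msg Atom) × Msg Atom)) {i : ℕ}
    (hi : i < tr.length) : knowAfter K₀ tr (i + 1) = knowAfter K₀ tr i ∪ {tr[i].2} := by
  ext m
  simp only [knowAfter, List.take_succ_eq_append_getElem hi, List.mem_append,
    List.mem_singleton, Set.mem_union, Set.mem_ofPred_eq, Set.mem_singleton_iff]
  grind

section Levels

variable {Key : Set Atom} {inv : Atom → Atom} {lvl : Atom → L} {KI : L} {α : Atom}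

theorem Safe.le_apply_singleton_of_deduces (hF : Safe Key inv lvl KI F) (hα : ¬ lvl α ≤ KI)
    {M : Set (Msg Atom)} {m : Msg Atom} (hM : lvl α ≤ F α M) (hm : Deduces Key inv M m) :
    lvl α ≤ F α {m} := by
  by_cases hαm : α ∈ m.atoms
  · exact (hF.2 M m hm α hαm).resolve_right hα |>.trans' hM
  · simp [hF.1.apply_singleton_of_notMem hαm]

theorem Safe.not_deduces_atom (hF : Safe Key inv lvl KI F) (hα₁ : lvl α ≠ ⊥)
    (hα₂ : ¬ lvl α ≤ KI) {M : Set (Msg Atom)} (hM : lvl α ≤ F α M) :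
    ¬ Deduces Key inv M (Msg.atom α) := fun hded =>
  hα₁ <| le_bot_iff.mp <| hF.1.1 α ▸ hF.le_apply_singleton_of_deduces hα₂ hM hded

theorem Safe.le_apply_sent_of_increasing (hF : Safe Key inv lvl KI F) (hα : ¬ lvl α ≤ KI)
    {P : Set (Set (Msg Atom) × Msg Atom)} (hInc : Increasing lvl F P)
    {st : Set (Msg Atom) × Msg Atom} (hst : st ∈ P) (hfin : st.1.Finite)
    {K : Set (Msg Atom)} (hK : lvl α ≤ F α K) (hrecv : ∀ m ∈ st.1, Deduces Key inv K m) :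
    lvl α ≤ F α {st.2} := by
  by_cases hαs : α ∈ st.2.atoms
  · have hN : lvl α ≤ F α st.1 := hF.1.le_apply_of_finite hfin fun m hm =>
      hF.le_apply_singleton_of_deduces hα hK (hrecv m hm)
    exact le_inf le_rfl hN |>.trans (hInc st hst α hαs)
  · simp [hF.1.apply_singleton_of_notMem hαs]

theorem Safe.le_apply_knowAfter (hF : Safe Key inv lvl KI F)
    {P : Set (Set (Msg Atom) × Msg Atom)} (hPfin : ∀ st ∈ P, st.1.Finite)
    (hInc : Increasing lvl F P) {K₀ : Set (Msg Atom)} {tr : List (Set (Msg Atom) × Msg Atom)}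
    (htr : ValidTrace Key inv P K₀ tr) (hα₀ : lvl α ≤ F α K₀) (hα : ¬ lvl α ≤ KI) :
    ∀ i ≤ tr.length, lvl α ≤ F α (knowAfter K₀ tr i) := by
  intro i
  induction i with
  | zero => simpa [knowAfter_zero] using hα₀
  | succ i ih =>
    intro hi
    have hi : i < tr.length := hi
    have hK := ih hi.le
    obtain ⟨hst, hrecv⟩ := htr i hi
    rw [knowAfter_succ K₀ tr hi, hF.1.apply_union]
    exact le_inf hK (hF.le_apply_sent_of_increasing hα hInc hst (hPfin _ hst) hK hrecv)

end Levels

theorem secrecy_in_increasing_protocols_general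
    {Atom L : Type} [CompleteLattice L]
    (Key : Set Atom) (inv : Atom → Atom)
    (lvl : Atom → L) (KI : L)
    (F : Atom → Set (Msg Atom) → L) (hF : Safe Key inv lvl KI F)
    (P : Set (Set (Msg Atom) × Msg Atom)) (hPfin : ∀ st ∈ P, st.1.Finite)
    (hInc : Increasing lvl F P)
    (K₀ : Set (Msg Atom)) (tr : List (Set (Msg Atom) × Msg Atom))
    (htr : ValidTrace Key inv P K₀ tr)
    (α : Atom) (hα₀ : lvl α ≤ F α K₀) (hα₁ : lvl α ≠ ⊥) (hα₂ : ¬ lvl α ≤ KI) :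
    ¬ Deduces Key inv (knowAfter K₀ tr tr.length) (Msg.atom α) :=
  hF.not_deduces_atom hα₁ hα₂ (hF.le_apply_knowAfter hPfin hInc htr hα₀ hα₂ _ le_rfl)

/-- **Secrecy in increasing protocols.** If `F` is safe and the ground protocol `P`
is `F`-increasing, then `P` keeps its secret inputs: along any valid trace, an atom
whose level is maintained by the initial knowledge (`F(α,K₀) ⊒ ⌜α⌝`), is a real secret
(`⌜α⌝ ≠ ⊥`) and is not granted to the intruder (`¬(⌜K(I)⌝ ⊒ ⌜α⌝)`) is never deduced. -/
theorem secrecy_in_increasing_protocols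
    {Atom L : Type} [Countable Atom] [CompleteLattice L]
    (Key : Set Atom) (inv : Atom → Atom)
    (hinv : ∀ k ∈ Key, inv k ∈ Key ∧ inv (inv k) = k)
    (lvl : Atom → L) (KI : L)
    (F : Atom → Set (Msg Atom) → L) (hF : Safe Key inv lvl KI F)
    (P : Set (Set (Msg Atom) × Msg Atom)) (hPfin : ∀ st ∈ P, st.1.Finite)
    (hInc : Increasing lvl F P)
    (K₀ : Set (Msg Atom)) (tr : List (Set (Msg Atom) × Msg Atom))
    (htr : ValidTrace Key inv P K₀ tr)
    (α : Atom) (hα₀ : lvl α ≤ F α K₀) (hα₁ : lvl α ≠ ⊥) (hα₂ : ¬ lvl α ≤ KI) :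
    ¬ Deduces Key inv (knowAfter K₀ tr tr.length) (Msg.atom α) :=
  secrecy_in_increasing_protocols_general Key inv lvl KI F hF P hPfin hInc K₀ tr htr α hα₀ hα₁ hα₂
end

section
/- Let F be a safe function, α an atom, and M a set of messages such that F(α, M) ⊒ ⌜α⌝ and ⌜α⌝ ≠ ⊥. If M ⊢ atom α, then ⌜K(I)⌝ ⊒ ⌜α⌝ (the intruder can learn a clear secret whose level is maintained only if the context explicitly authorizes him to know it). -/
theorem Safe.eq_bot_or_authorized_of_deduces_atom {Atom L : Type} [CompleteLattice L]
    {Key : Set Atom} {inv : Atom → Atom} {lvl : Atom → L} {KI : L}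
    {F : Atom → Set (Msg Atom) → L} (hF : Safe Key inv lvl KI F)
    {α : Atom} {M : Set (Msg Atom)} (hded : Deduces Key inv M (Msg.atom α)) :
    F α M = ⊥ ∨ lvl α ≤ KI :=
  (hF.2 M _ hded α rfl).imp_left fun h => le_bot_iff.mp (h.trans_eq (hF.1.1 α))

theorem deducible_secret_implies_authorized_general
    {Atom L : Type} [CompleteLattice L]
    (Key : Set Atom) (inv : Atom → Atom)
    (lvl : Atom → L) (KI : L)
    (F : Atom → Set (Msg Atom) → L) (hF : Safe Key inv lvl KI F)
    (α : Atom) (M : Set (Msg Atom))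
    (hM : lvl α ≤ F α M) (hα : lvl α ≠ ⊥)
    (hded : Deduces Key inv M (Msg.atom α)) :
    lvl α ≤ KI :=
  (hF.eq_bot_or_authorized_of_deduces_atom hded).resolve_left
    fun hbot => hα (le_bot_iff.mp (hbot ▸ hM))

/-- If `F` is safe, `F(α, M) ⊒ ⌜α⌝` and `⌜α⌝ ≠ ⊥`, then the intruder can deduce the
clear atom `α` from `M` only if the context authorizes him: `⌜K(I)⌝ ⊒ ⌜α⌝`. -/
theorem deducible_secret_implies_authorized
    {Atom L : Type} [Countable Atom] [CompleteLattice L]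
    (Key : Set Atom) (inv : Atom → Atom)
    (hinv : ∀ k ∈ Key, inv k ∈ Key ∧ inv (inv k) = k)
    (lvl : Atom → L) (KI : L)
    (F : Atom → Set (Msg Atom) → L) (hF : Safe Key inv lvl KI F)
    (α : Atom) (M : Set (Msg Atom))
    (hM : lvl α ≤ F α M) (hα : lvl α ≠ ⊥)
    (hded : Deduces Key inv M (Msg.atom α)) :
    lvl α ≤ KI :=
  deducible_secret_implies_authorized_general Key inv lvl KI F hF α M hM hα hded
end

section
/- Binding of a witness function (Proposition on bounding): let F : Atom → Set Msg → L be any function, T a set of messages (the encryption patterns) such that distinct elements of T have pairwise disjoint sets of variables, m ∈ T, σ a substitution, and α an atom, and let W be the witness function for T. Then G_F(α, m, σ) ⊒ W(α, mσ) ⊒ ⊓ { G_F(α, m', σ') : m' ∈ T, σ' a substitution with m'σ' = mσ' }; i.e. the value of the witness function on the valid trace mσ is bounded above by the derivative evaluation on the source (m, σ) and bounded below by the infimum of the derivative evaluations over all patterns unifiable with m, and both bounds are independent of σ. -/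
open scoped Classical in
/-- Homomorphic application `mσ` of a substitution `σ` on the variables `Var`. -/
noncomputable def Msg.subst {Atom : Type} (Var : Set Atom) (σ : Atom → Msg Atom) :
    Msg Atom → Msg Atom
  | .atom a => if a ∈ Var then σ a else .atom a
  | .pair m₁ m₂ => .pair (Msg.subst Var σ m₁) (Msg.subst Var σ m₂)
  | .enc m k => .enc (Msg.subst Var σ m) k

/-- A message is ground if no variable occurs in it. -/
def Ground {Atom : Type} (Var : Set Atom) (m : Msg Atom) : Prop :=
  ∀ a ∈ m.atoms, a ∉ Var

/-- A substitution assigns a ground message to every variable. -/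
def IsSubst {Atom : Type} (Var : Set Atom) (σ : Atom → Msg Atom) : Prop :=
  ∀ X ∈ Var, Ground Var (σ X)

open scoped Classical in
/-- `derivE Var ε S m`: replace in `m` every variable not in `S` by the constant `ε`.
`derivE Var ε ∅ m` is the full derivative `∂m`, and `derivE Var ε {X} m` is `∂[X̄]m`. -/
noncomputable def derivE {Atom : Type} (Var : Set Atom) (ε : Atom) (S : Set Atom) :
    Msg Atom → Msg Atom
  | .atom a => if a ∈ Var ∧ a ∉ S then .atom ε else .atom a
  | .pair m₁ m₂ => .pair (derivE Var ε S m₁) (derivE Var ε S m₂)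
  | .enc m k => .enc (derivE Var ε S m) k

open scoped Classical in
/-- The derivative evaluation `G_F(α, m, σ)`: evaluate `F` on `∂m` if `α` occurs there,
on `∂[X̄]m` if `α` comes from the unique variable `X` of `m` with `σ(X) = atom α`,
and `⊤` otherwise. -/
noncomputable def derivEval {Atom L : Type} [CompleteLattice L]
    (Var : Set Atom) (ε : Atom) (F : Atom → Set (Msg Atom) → L)
    (α : Atom) (m : Msg Atom) (σ : Atom → Msg Atom) : L :=
  if α ∈ (derivE Var ε ∅ m).atoms then F α {derivE Var ε ∅ m}
  else if h : ∃! X, X ∈ Var ∧ X ∈ m.atoms ∧ σ X = Msg.atom α then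
    F h.choose {derivE Var ε {h.choose} m}
  else ⊤

/-- The witness function for the set of patterns `T`, on a ground message `t`:
the meet of the derivative evaluations over all sources `(m', σ')` of `t` in `T`. -/
noncomputable def witness {Atom L : Type} [CompleteLattice L]
    (Var : Set Atom) (ε : Atom) (F : Atom → Set (Msg Atom) → L)
    (T : Set (Msg Atom)) (α : Atom) (t : Msg Atom) : L :=
  sInf { l | ∃ m' ∈ T, ∃ σ', IsSubst Var σ' ∧ Msg.subst Var σ' m' = t ∧
              l = derivEval Var ε F α m' σ' }

/- The upper bound holds because `(m, σ)` is itself a source of `mσ`. For the lower bound, take a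
source `(m', σ')` of `mσ`. If `m' ≠ m`, their variables are disjoint, so `σ'` and `σ` glue into one
substitution `τ` (equal to `σ'` on the variables of `m'` and to `σ` elsewhere); it unifies `m'`
with `m` and gives `m'` the same derivative evaluation as `σ'`. -/

theorem Msg.subst_congr {Atom : Type} {Var : Set Atom} {σ σ' : Atom → Msg Atom} {m : Msg Atom}
    (h : Set.EqOn σ σ' (m.atoms ∩ Var)) : m.subst Var σ = m.subst Var σ' := by
  induction m with
  | atom a =>
    simp only [Msg.subst]
    split_ifs with ha
    exacts [h ⟨rfl, ha⟩, rfl]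
  | pair m₁ m₂ ih₁ ih₂ =>
    rw [Msg.subst, Msg.subst, ih₁ (h.mono (Set.inter_subset_inter_left _ Set.subset_union_left)),
      ih₂ (h.mono (Set.inter_subset_inter_left _ Set.subset_union_right))]
  | enc m k ih =>
    rw [Msg.subst, Msg.subst, ih (h.mono (Set.inter_subset_inter_left _ Set.subset_union_left))]

theorem derivEval_congr {Atom L : Type} [CompleteLattice L] {Var : Set Atom} {ε : Atom}
    {F : Atom → Set (Msg Atom) → L} {α : Atom} {m : Msg Atom} {σ σ' : Atom → Msg Atom}
    (h : Set.EqOn σ σ' (m.atoms ∩ Var)) :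
    derivEval Var ε F α m σ = derivEval Var ε F α m σ' := by
  have hsource : ∀ X, (X ∈ Var ∧ X ∈ m.atoms ∧ σ X = Msg.atom α) ↔
      (X ∈ Var ∧ X ∈ m.atoms ∧ σ' X = Msg.atom α) := fun X =>
    and_congr_right fun hX => and_congr_right fun hXm => by rw [h ⟨hXm, hX⟩]
  classical
  refine if_congr Iff.rfl rfl ?_
  by_cases hu : ∃! X, X ∈ Var ∧ X ∈ m.atoms ∧ σ X = Msg.atom α
  · have hu' := (existsUnique_congr hsource).mp hu
    rw [dif_pos hu, dif_pos hu', hu'.unique ((hsource _).mp hu.choose_spec.1) hu'.choose_spec.1]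
  · rw [dif_neg hu, dif_neg (mt (existsUnique_congr hsource).mpr hu)]

theorem IsSubst.piecewise {Atom : Type} {Var : Set Atom} {σ σ' : Atom → Msg Atom}
    (hσ : IsSubst Var σ) (hσ' : IsSubst Var σ') (s : Set Atom) [DecidablePred (· ∈ s)] :
    IsSubst Var (s.piecewise σ σ') := by
  intro X hX
  by_cases hXs : X ∈ s
  · simpa only [Set.piecewise_eq_of_mem _ _ _ hXs] using hσ X hX
  · simpa only [Set.piecewise_eq_of_notMem _ _ _ hXs] using hσ' X hX

theorem binding_witness_function_general
    {Atom L : Type} [CompleteLattice L]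
    (Var : Set Atom)
    (ε : Atom)
    (F : Atom → Set (Msg Atom) → L)
    (T : Set (Msg Atom))
    (hT : ∀ m₁ ∈ T, ∀ m₂ ∈ T, m₁ ≠ m₂ → Disjoint (m₁.atoms ∩ Var) (m₂.atoms ∩ Var))
    (m : Msg Atom) (hm : m ∈ T)
    (σ : Atom → Msg Atom) (hσ : IsSubst Var σ) (α : Atom) :
    witness Var ε F T α (Msg.subst Var σ m) ≤ derivEval Var ε F α m σ ∧
    sInf { l | ∃ m' ∈ T, ∃ σ', IsSubst Var σ' ∧
            Msg.subst Var σ' m' = Msg.subst Var σ' m ∧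
            l = derivEval Var ε F α m' σ' }
      ≤ witness Var ε F T α (Msg.subst Var σ m) := by
  classical
  refine ⟨sInf_le ⟨m, hm, σ, hσ, rfl, rfl⟩, sInf_le_sInf ?_⟩
  rintro _ ⟨m', hm', σ', hσ', hsource, rfl⟩
  set τ := m'.atoms.piecewise σ' σ
  have hτm' : Set.EqOn τ σ' (m'.atoms ∩ Var) := fun a ha => Set.piecewise_eq_of_mem _ _ _ ha.1
  refine ⟨m', hm', τ, hσ'.piecewise hσ _, ?_, (derivEval_congr hτm').symm⟩
  rcases eq_or_ne m' m with rfl | hne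
  · rfl
  have hτm : Set.EqOn τ σ (m.atoms ∩ Var) := fun a ha =>
    Set.piecewise_eq_of_notMem _ _ _ fun ha' => (hT m' hm' m hm hne).ne_of_mem ⟨ha', ha.2⟩ ha rfl
  rw [Msg.subst_congr hτm', Msg.subst_congr hτm, hsource]

/-- **Binding a witness function.** For a pattern `m ∈ T` and a substitution `σ`,
the value of the witness function on the valid trace `mσ` is bounded above by the
derivative evaluation `G_F(α, m, σ)` on its source, and bounded below by the meet of
the derivative evaluations over all patterns of `T` unifiable with `m`. -/
theorem binding_witness_function
    {Atom L : Type} [Countable Atom] [CompleteLattice L]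
    (Var Key : Set Atom) (hVK : Disjoint Var Key)
    (ε : Atom) (hε : ε ∉ Var ∪ Key)
    (F : Atom → Set (Msg Atom) → L)
    (T : Set (Msg Atom))
    (hT : ∀ m₁ ∈ T, ∀ m₂ ∈ T, m₁ ≠ m₂ → Disjoint (m₁.atoms ∩ Var) (m₂.atoms ∩ Var))
    (m : Msg Atom) (hm : m ∈ T)
    (σ : Atom → Msg Atom) (hσ : IsSubst Var σ) (α : Atom) :
    witness Var ε F T α (Msg.subst Var σ m) ≤ derivEval Var ε F α m σ ∧
    sInf { l | ∃ m' ∈ T, ∃ σ', IsSubst Var σ' ∧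
            Msg.subst Var σ' m' = Msg.subst Var σ' m ∧
            l = derivEval Var ε F α m' σ' }
      ≤ witness Var ε F T α (Msg.subst Var σ m) :=
  binding_witness_function_general Var ε F T hT m hm σ hσ α
end
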